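/- arXiv:1602.03419 — 2 statements merged into one kernel-verified Lean document; each statement's English description precedes it below -/
import Mathlib

section
/- Let Σ be a finite alphabet of size d and let S ⊆ ℕ^d be a semilinear set with representation S = ⋃_{i∈I} L(cᵢ; Pᵢ), where ‖cᵢ‖_∞ ≤ M and ‖p‖_∞ ≤ M for all p ∈ Pᵢ and all i ∈ I. Then S also has a representation S = ⋃_{j∈J} L(bⱼ; Qⱼ) where for each j ∈ J there is an i ∈ I such that L(bⱼ; Qⱼ) ⊆ L(cᵢ; Pᵢ), Qⱼ is a linearly independent subset of Pᵢ (hence |Qⱼ| ≤ d), and ‖bⱼ‖_∞ ≤ (2M+1)^d · (M^d · d^{d/2})². -/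
/-- The linear set with base b and (finite) period set P. -/
def linSet {d : ℕ} (b : Fin d → ℕ) (P : Finset (Fin d → ℕ)) : Set (Fin d → ℕ) :=
  {v | ∃ lam : (Fin d → ℕ) → ℕ, v = b + ∑ p ∈ P, lam p • p}


namespace SLC

def IndepQ {d : ℕ} (Q : Finset (Fin d → ℕ)) : Prop :=
  LinearIndependent ℚ (fun p : (Q : Finset (Fin d → ℕ)) => (fun k => ((p : Fin d → ℕ) k : ℚ)))

def toQ {d : ℕ} (v : Fin d → ℕ) : Fin d → ℚ := fun k => (v k : ℚ)

lemma toQ_inj {d : ℕ} : Function.Injective (toQ (d := d)) := by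
  intro a b h
  funext k
  have := congrFun h k
  simpa [toQ] using this

/-- Main step 1: a dependent finset has an element in the span of the rest. -/
lemma exists_mem_span {d : ℕ} (P : Finset (Fin d → ℕ)) (hdep : ¬ IndepQ P) :
    ∃ p₀ ∈ P, toQ p₀ ∈ Submodule.span ℚ (toQ '' ((P.erase p₀ : Finset (Fin d → ℕ)) : Set (Fin d → ℕ))) := by
  classical
  rw [IndepQ, Fintype.linearIndependent_iff] at hdep
  push_neg at hdep
  obtain ⟨g, hg0, x₀, hx₀⟩ := hdep
  refine ⟨(x₀ : Fin d → ℕ), x₀.2, ?_⟩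
  set G : (Fin d → ℕ) → ℚ := fun p => if h : p ∈ P then g ⟨p, h⟩ else 0 with hG
  have hGsum : ∑ p ∈ P, G p • toQ p = 0 := by
    rw [← hg0, ← Finset.sum_attach P (fun p => G p • toQ p)]
    apply Finset.sum_congr rfl
    intro x _
    simp only [hG, x.2, dif_pos]
    rfl
  have hGx₀ : G (x₀ : Fin d → ℕ) = g x₀ := by simp [hG, x₀.2]
  have key : G (x₀ : Fin d → ℕ) • toQ (x₀ : Fin d → ℕ)
      = - ∑ p ∈ P.erase (x₀ : Fin d → ℕ), G p • toQ p := by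
    have := Finset.add_sum_erase P (fun p => G p • toQ p) x₀.2
    rw [hGsum] at this
    linear_combination (norm := module) this
  have hne : G (x₀ : Fin d → ℕ) ≠ 0 := by rwa [hGx₀]
  have : toQ (x₀ : Fin d → ℕ)
      = (G (x₀ : Fin d → ℕ))⁻¹ • (G (x₀ : Fin d → ℕ) • toQ (x₀ : Fin d → ℕ)) := by
    rw [inv_smul_smul₀ hne]
  rw [this, key]
  refine Submodule.smul_mem _ _ (Submodule.neg_mem _ (Submodule.sum_mem _ ?_))
  intro p hp
  exact Submodule.smul_mem _ _ (Submodule.subset_span ⟨p, by simp at hp ⊢; tauto, rfl⟩)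

end SLC

namespace SLC

/-- Row selection: an independent family of m vectors in ℚ^d admits m coordinates
on which the square matrix is nonsingular. -/
lemma exists_rows {m d : ℕ} (u : Fin m → (Fin d → ℚ)) (hu : LinearIndependent ℚ u) :
    ∃ R : Fin m → Fin d, Function.Injective R ∧
      (Matrix.of fun i j => u j (R i) : Matrix (Fin m) (Fin m) ℚ).det ≠ 0 := by
  classical
  set A : Matrix (Fin d) (Fin m) ℚ := Matrix.of fun k j => u j k with hA
  have hrank : A.rank = m := by
    rw [Matrix.rank_eq_finrank_span_cols]
    have hr : Set.range A.col = Set.range u := rfl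
    rw [hr, finrank_span_eq_card hu, Fintype.card_fin]
  have hspan_rows : Submodule.span ℚ (Set.range A) = ⊤ := by
    apply Submodule.eq_top_of_finrank_eq
    have h1 := Matrix.rank_eq_finrank_span_cols A.transpose
    rw [Matrix.rank_transpose, hrank] at h1
    change m = Module.finrank ℚ (Submodule.span ℚ (Set.range A)) at h1
    rw [← h1, Module.finrank_fintype_fun_eq_card, Fintype.card_fin]
  obtain ⟨bs, hbsub, hbspan, hbind⟩ := exists_linearIndependent ℚ (Set.range A)
  rw [hspan_rows] at hbspan
  have hbfin : bs.Finite := (Set.finite_range A).subset hbsub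
  letI : Fintype bs := hbfin.fintype
  have hbcard : Fintype.card bs = m := by
    have h1 := finrank_span_set_eq_card hbind
    rw [hbspan, finrank_top, Module.finrank_fintype_fun_eq_card, Fintype.card_fin] at h1
    rw [← Set.toFinset_card, ← h1]
  have hpick : ∀ x : bs, ∃ k : Fin d, A k = (x : Fin m → ℚ) := by
    intro x
    obtain ⟨k, hk⟩ := hbsub x.2
    exact ⟨k, hk⟩
  choose r hr using hpick
  have hrinj : Function.Injective r := by
    intro x y hxy
    apply Subtype.ext
    rw [← hr x, ← hr y, hxy]
  let e : Fin m ≃ bs := (Fintype.equivFinOfCardEq hbcard).symm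
  refine ⟨fun i => r (e i), hrinj.comp e.injective, ?_⟩
  have hrows : (fun i => (Matrix.of fun i j => u j (r (e i)) : Matrix (Fin m) (Fin m) ℚ) i)
      = fun i => ((e i : Fin m → ℚ)) := by
    funext i
    rw [← hr (e i)]
    rfl
  have hind2 : LinearIndependent ℚ (fun i => (Matrix.of fun i j => u j (r (e i)) : Matrix (Fin m) (Fin m) ℚ) i) := by
    rw [hrows]
    exact hbind.comp e e.injective
  have := Matrix.linearIndependent_rows_iff_isUnit.mp hind2
  have hdet := (Matrix.isUnit_iff_isUnit_det _).mp this
  exact isUnit_iff_ne_zero.mp hdet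

end SLC

namespace SLC

lemma exists_small_relation {d M : ℕ} (hM : 1 ≤ M) (P : Finset (Fin d → ℕ))
    (hPM : ∀ p ∈ P, ∀ k, p k ≤ M) (hdep : ¬ IndepQ P) :
    ∃ α : (Fin d → ℕ) → ℤ,
      (∀ p, p ∉ P → α p = 0) ∧ (∃ p ∈ P, 0 < α p) ∧
      (∀ p, |α p| ≤ (d.factorial * M ^ d : ℤ)) ∧
      (∀ k, ∑ p ∈ P, α p * (p k : ℤ) = 0) := by
  classical
  obtain ⟨p₀, hp₀P, hspan⟩ := exists_mem_span P hdep
  obtain ⟨s, hst, hspaneq, hindep⟩ :=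
    exists_linearIndependent ℚ (toQ '' ((P.erase p₀ : Finset (Fin d → ℕ)) : Set (Fin d → ℕ)))
  rw [← hspaneq] at hspan
  -- the preimage finset C of s
  set C : Finset (Fin d → ℕ) := (P.erase p₀).filter (fun p => toQ p ∈ s) with hC
  have himg : toQ '' (C : Set (Fin d → ℕ)) = s := by
    apply Set.Subset.antisymm
    · rintro x ⟨p, hp, rfl⟩
      simp only [hC, Finset.coe_filter, Set.mem_setOf_eq] at hp
      exact hp.2
    · intro x hx
      obtain ⟨p, hp, rfl⟩ := hst hx
      refine ⟨p, ?_, rfl⟩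
      simp only [hC, Finset.coe_filter, Set.mem_setOf_eq]
      have hp' : p ∈ P ∧ ¬ p = p₀ := by simpa using hp
      constructor
      · simp only [Finset.mem_erase]
        tauto
      · exact hx
  set m := C.card with hm
  set e : Fin m ≃ {x // x ∈ C} := C.equivFin.symm with he
  set v : Fin m → (Fin d → ℕ) := fun j => (e j : Fin d → ℕ) with hv
  have hvC : ∀ j, v j ∈ C := fun j => (e j).2
  have hvinj : Function.Injective v := by
    intro a b hab
    exact e.injective (Subtype.ext hab)
  set u : Fin m → (Fin d → ℚ) := fun j => toQ (v j) with hu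
  -- u is linearly independent
  have huind : LinearIndependent ℚ u := by
    have hφinj : Function.Injective (fun j => (⟨toQ (v j), by rw [← himg]; exact Set.mem_image_of_mem _ (hvC j)⟩ : s)) := by
      intro a b hab
      exact hvinj (toQ_inj (congrArg Subtype.val hab))
    exact hindep.comp _ hφinj
  -- p₀ in span of u
  have hrange : Set.range u = s := by
    rw [← himg]
    apply Set.Subset.antisymm
    · rintro x ⟨j, rfl⟩
      exact Set.mem_image_of_mem _ (hvC j)
    · rintro x ⟨p, hp, rfl⟩
      obtain ⟨j, hj⟩ := e.surjective ⟨p, hp⟩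
      refine ⟨j, ?_⟩
      show toQ (↑(e j)) = toQ p
      rw [hj]
  have hspan2 : toQ p₀ ∈ Submodule.span ℚ (Set.range u) := by rwa [hrange]
  obtain ⟨β, hβ⟩ := (Submodule.mem_span_range_iff_exists_fun ℚ).mp hspan2
  -- row selection
  obtain ⟨R, hRinj, hdet⟩ := exists_rows u huind
  set S : Matrix (Fin m) (Fin m) ℚ := Matrix.of fun i j => u j (R i) with hS
  set Z : Matrix (Fin m) (Fin m) ℤ := Matrix.of fun i j => ((v j (R i) : ℕ) : ℤ) with hZ
  have hZS : Z.map ((Int.castRingHom ℚ) : ℤ → ℚ) = S := by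
    ext i j
    simp [hZ, hS, hu, toQ]
  have hdetZ : ((Z.det : ℤ) : ℚ) = S.det := by
    rw [← hZS]
    simpa using RingHom.map_det (Int.castRingHom ℚ) Z
  have hZdet0 : Z.det ≠ 0 := by
    intro h
    rw [h] at hdetZ
    exact hdet hdetZ.symm
  set y : Fin m → ℤ := fun i => (p₀ (R i) : ℤ) with hy
  set γ : Fin m → ℤ := Z.cramer y with hγ
  have hcr : Z.mulVec γ = Z.det • y := Matrix.mulVec_cramer Z y
  -- relation over ℚ on selected rows
  have hSβ : S.mulVec β = fun i => (p₀ (R i) : ℚ) := by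
    funext i
    have := congrFun hβ (R i)
    simpa [Matrix.mulVec, dotProduct, hS, mul_comm, toQ] using this
  have hSu : IsUnit S := (Matrix.isUnit_iff_isUnit_det S).mpr (isUnit_iff_ne_zero.mpr hdet)
  have hγβ : (fun j => (γ j : ℚ)) = (Z.det : ℤ) • β := by
    apply Matrix.mulVec_injective_iff_isUnit.mpr hSu
    have h1 : S.mulVec (fun j => (γ j : ℚ)) = fun i => ((Z.mulVec γ i : ℤ) : ℚ) := by
      funext i
      rw [← hZS]
      simp [Matrix.mulVec, dotProduct, Matrix.map]
    rw [h1, hcr]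
    have h2 : S.mulVec ((Z.det : ℤ) • β) = (Z.det : ℤ) • S.mulVec β := by
      rw [Matrix.mulVec_smul]
    rw [h2, hSβ]
    funext i
    simp only [hy, Pi.smul_apply, smul_eq_mul, zsmul_eq_mul]
    push_cast
    ring
  -- full relation over ℤ
  have hZrel : ∀ k, Z.det * (p₀ k : ℤ) = ∑ j, γ j * (v j k : ℤ) := by
    intro k
    have h1 : (Z.det : ℚ) * (p₀ k : ℚ) = ∑ j, (γ j : ℚ) * (v j k : ℚ) := by
      have h2' : (p₀ k : ℚ) = ∑ j, β j * (v j k : ℚ) := by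
        have h2 := congrFun hβ k
        simp only [Finset.sum_apply, Pi.smul_apply, hu, toQ, smul_eq_mul] at h2
        exact h2.symm
      calc (Z.det : ℚ) * (p₀ k : ℚ) = ∑ j, ((Z.det : ℤ) • β) j * (v j k : ℚ) := by
            rw [h2', Finset.mul_sum]
            apply Finset.sum_congr rfl
            intro j _
            simp only [Pi.smul_apply, smul_eq_mul, zsmul_eq_mul]
            ring
        _ = ∑ j, (γ j : ℚ) * (v j k : ℚ) := by
            apply Finset.sum_congr rfl
            intro j _
            rw [← congrFun hγβ j]
    have h3 : ((Z.det * (p₀ k : ℤ) : ℤ) : ℚ) = ((∑ j, γ j * (v j k : ℤ) : ℤ) : ℚ) := by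
      simp only [Int.cast_mul, Int.cast_sum, Int.cast_natCast]
      exact h1
    exact_mod_cast h3
  -- determinant bounds
  have hmd : m ≤ d := by
    have h := huind.fintype_card_le_finrank
    rwa [Module.finrank_fintype_fun_eq_card, Fintype.card_fin, Fintype.card_fin] at h
  have habs : ∀ (W : Matrix (Fin m) (Fin m) ℤ), (∀ i j, |W i j| ≤ (M : ℤ)) →
      |W.det| ≤ (d.factorial * M ^ d : ℤ) := by
    intro W hW
    have h1 := Matrix.det_le (A := W) (abv := AbsoluteValue.abs) (x := (M : ℤ)) hW
    rw [Fintype.card_fin] at h1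
    calc |W.det| ≤ m.factorial • (M : ℤ) ^ m := h1
      _ = (m.factorial : ℤ) * (M : ℤ) ^ m := by simp [nsmul_eq_mul]
      _ ≤ (d.factorial : ℤ) * (M : ℤ) ^ d := by
          have h2 : (m.factorial : ℤ) ≤ (d.factorial : ℤ) := by
            exact_mod_cast Nat.factorial_le hmd
          have h3 : ((M : ℤ)) ^ m ≤ (M : ℤ) ^ d := by
            exact_mod_cast Nat.pow_le_pow_right hM hmd
          exact mul_le_mul h2 h3 (by positivity) (by positivity)
  have hCP : C ⊆ P.erase p₀ := Finset.filter_subset _ _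
  have hvP : ∀ j, v j ∈ P := fun j => Finset.erase_subset _ _ (hCP (hvC j))
  have hZbound : ∀ i j, |Z i j| ≤ (M : ℤ) := by
    intro i j
    have : Z i j = ((v j (R i) : ℕ) : ℤ) := rfl
    rw [this, abs_of_nonneg (Int.natCast_nonneg _)]
    exact_mod_cast hPM _ (hvP j) (R i)
  have hdetbound : |Z.det| ≤ (d.factorial * M ^ d : ℤ) := habs Z hZbound
  have hγbound : ∀ j, |γ j| ≤ (d.factorial * M ^ d : ℤ) := by
    intro j
    have : γ j = (Z.updateCol j y).det := by rw [hγ, Matrix.cramer_apply]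
    rw [this]
    apply habs
    intro i j'
    rcases eq_or_ne j' j with h | h
    · rw [Matrix.updateCol_apply, if_pos h]
      have : y i = ((p₀ (R i) : ℕ) : ℤ) := rfl
      rw [this, abs_of_nonneg (Int.natCast_nonneg _)]
      exact_mod_cast hPM _ hp₀P (R i)
    · rw [Matrix.updateCol_apply, if_neg h]
      exact hZbound i j'
  -- the candidate relation
  set α0 : (Fin d → ℕ) → ℤ := fun p =>
    if p = p₀ then Z.det else if h : p ∈ C then -γ (e.symm ⟨p, h⟩) else 0 with hα0
  have hp₀notC : p₀ ∉ C := fun h => (Finset.mem_erase.mp (hCP h)).1 rfl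
  have hmain : ∀ k, ∑ p ∈ P, α0 p * (p k : ℤ) = 0 := by
    intro k
    rw [← Finset.add_sum_erase P _ hp₀P]
    have hterm : α0 p₀ * (p₀ k : ℤ) = Z.det * (p₀ k : ℤ) := by simp [hα0]
    have hrest : ∑ p ∈ P.erase p₀, α0 p * (p k : ℤ) = ∑ p ∈ C, α0 p * (p k : ℤ) := by
      symm
      apply Finset.sum_subset hCP
      intro x hx hnx
      have hxne : x ≠ p₀ := (Finset.mem_erase.mp hx).1
      simp [hα0, hxne, hnx]
    have hval : ∀ x : {q // q ∈ C}, α0 (x : Fin d → ℕ) = - γ (e.symm x) := by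
      intro x
      have hxne : (x : Fin d → ℕ) ≠ p₀ := by
        intro hh
        exact hp₀notC (hh ▸ x.2)
      simp only [hα0, if_neg hxne, dif_pos x.2]
    have hCsum : ∑ p ∈ C, α0 p * (p k : ℤ) = - ∑ j, γ j * (v j k : ℤ) := by
      rw [← Finset.sum_attach C (fun p => α0 p * (p k : ℤ))]
      have hcomp := Equiv.sum_comp e
        (fun x : {q // q ∈ C} => -(γ (e.symm x)) * ((x : Fin d → ℕ) k : ℤ))
      calc ∑ x ∈ C.attach, α0 (x : Fin d → ℕ) * ((x : Fin d → ℕ) k : ℤ)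
          = ∑ x : {q // q ∈ C}, -(γ (e.symm x)) * ((x : Fin d → ℕ) k : ℤ) := by
            rw [← Finset.univ_eq_attach]
            apply Finset.sum_congr rfl
            intro x _
            rw [hval x]
        _ = ∑ j, -(γ (e.symm (e j))) * ((v j) k : ℤ) := by rw [← hcomp]
        _ = - ∑ j, γ j * (v j k : ℤ) := by
            rw [← Finset.sum_neg_distrib]
            apply Finset.sum_congr rfl
            intro j _
            rw [Equiv.symm_apply_apply]
            ring
    rw [hterm, hrest, hCsum, hZrel k]
    ring
  have hsupp0 : ∀ p, p ∉ P → α0 p = 0 := by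
    intro p hp
    have h1 : p ≠ p₀ := fun h => hp (h ▸ hp₀P)
    have h2 : p ∉ C := fun h => hp (Finset.erase_subset _ _ (hCP h))
    simp [hα0, h1, h2]
  have hbound0 : ∀ p, |α0 p| ≤ (d.factorial * M ^ d : ℤ) := by
    intro p
    rcases eq_or_ne p p₀ with h1 | h1
    · simpa [hα0, h1] using hdetbound
    · by_cases h2 : p ∈ C
      · simp only [hα0, if_neg h1, dif_pos h2, abs_neg]
        exact hγbound _
      · simp only [hα0, if_neg h1, dif_neg h2, abs_zero]
        positivity
  rcases hZdet0.lt_or_gt with hneg | hpos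
  · refine ⟨fun p => -α0 p, fun p hp => by show -α0 p = 0; rw [hsupp0 p hp, neg_zero],
      ⟨p₀, hp₀P, ?_⟩, fun p => by show |(-α0 p)| ≤ _; rw [abs_neg]; exact hbound0 p, fun k => ?_⟩
    · show 0 < -α0 p₀
      have : α0 p₀ = Z.det := by simp [hα0]
      rw [this]
      omega
    · show ∑ p ∈ P, -α0 p * (p k : ℤ) = 0
      have : ∑ p ∈ P, -α0 p * (p k : ℤ) = - ∑ p ∈ P, α0 p * (p k : ℤ) := by
        rw [← Finset.sum_neg_distrib]
        apply Finset.sum_congr rfl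
        intro p _
        ring
      rw [this, hmain k, neg_zero]
  · refine ⟨α0, hsupp0, ⟨p₀, hp₀P, ?_⟩, hbound0, hmain⟩
    have : α0 p₀ = Z.det := by simp [hα0]
    rw [this]
    exact hpos


end SLC

namespace SLC

lemma indepQ_empty {d : ℕ} : IndepQ (∅ : Finset (Fin d → ℕ)) := by
  have : IsEmpty ((∅ : Finset (Fin d → ℕ)) : Finset (Fin d → ℕ)) := by
    simp [Finset.isEmpty_coe_sort]
    exact ⟨fun x => x.2⟩
  exact linearIndependent_empty_type

lemma decomp {d : ℕ} (M : ℕ) : ∀ (n : ℕ) (P : Finset (Fin d → ℕ)), P.card ≤ n →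
    (∀ p ∈ P, ∀ k, p k ≤ M) → (0 : Fin d → ℕ) ∉ P → ∀ lam : (Fin d → ℕ) → ℕ,
    ∃ (Q : Finset (Fin d → ℕ)) (s mu : (Fin d → ℕ) → ℕ),
      Q ⊆ P ∧ IndepQ Q ∧ (∀ p, s p ≤ d.factorial * M ^ d) ∧ (∀ p, p ∉ P → s p = 0) ∧
      ∑ p ∈ P, lam p • p = (∑ p ∈ P, s p • p) + ∑ q ∈ Q, mu q • q := by
  classical
  intro n
  induction n with
  | zero =>
    intro P hcard hPM h0 lam
    have hPempty : P = ∅ := Finset.card_eq_zero.mp (Nat.le_zero.mp hcard)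
    subst hPempty
    exact ⟨∅, 0, lam, subset_rfl, indepQ_empty, fun p => Nat.zero_le _, fun _ _ => rfl, by simp⟩
  | succ n ih =>
    intro P hcard hPM h0 lam
    by_cases hind : IndepQ P
    · exact ⟨P, 0, lam, subset_rfl, hind, fun p => Nat.zero_le _, fun _ _ => rfl, by simp⟩
    have hM : 1 ≤ M := by
      by_contra hMc
      have hPe : P = ∅ := by
        apply Finset.eq_empty_iff_forall_notMem.mpr
        intro p hp
        have hp0 : p = 0 := by
          funext k
          have := hPM p hp k
          show p k = 0
          omega
        exact h0 (hp0 ▸ hp)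
      rw [hPe] at hind
      exact hind indepQ_empty
    obtain ⟨α, hαsupp, ⟨q₁, hq₁P, hq₁pos⟩, hαbound, hαrel⟩ :=
      exists_small_relation hM P hPM hind
    suffices h : ∀ (N : ℕ) (lam : (Fin d → ℕ) → ℕ),
        (∑ p ∈ P.filter (fun p => 0 < α p), lam p) < N →
        ∃ (Q : Finset (Fin d → ℕ)) (s mu : (Fin d → ℕ) → ℕ),
          Q ⊆ P ∧ IndepQ Q ∧ (∀ p, s p ≤ d.factorial * M ^ d) ∧ (∀ p, p ∉ P → s p = 0) ∧
          ∑ p ∈ P, lam p • p = (∑ p ∈ P, s p • p) + ∑ q ∈ Q, mu q • q by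
      exact h _ lam (Nat.lt_succ_self _)
    intro N
    induction N with
    | zero => intro lam h; omega
    | succ N ihN =>
      intro lam hmeas
      by_cases hAc : ∃ p₀ ∈ P, 0 < α p₀ ∧ (lam p₀ : ℤ) < α p₀
      · obtain ⟨p₀, hp₀P, hp₀pos, hp₀lt⟩ := hAc
        obtain ⟨Q, s', mu, hQsub, hQind, hs'b, hs'supp, heq⟩ :=
          ih (P.erase p₀) (by have := Finset.card_erase_of_mem hp₀P; omega)
            (fun p hp k => hPM p (Finset.erase_subset _ _ hp) k)
            (fun h => h0 (Finset.erase_subset _ _ h)) lam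
        refine ⟨Q, Function.update s' p₀ (lam p₀), mu,
          hQsub.trans (Finset.erase_subset _ _), hQind, ?_, ?_, ?_⟩
        · intro p
          rcases eq_or_ne p p₀ with rfl | hne
          · rw [Function.update_self]
            have h1 : (lam p : ℤ) < ((d.factorial * M ^ d : ℕ) : ℤ) := by
              calc (lam p : ℤ) < α p := hp₀lt
                _ ≤ |α p| := le_abs_self _
                _ ≤ (d.factorial * M ^ d : ℤ) := hαbound p
                _ = ((d.factorial * M ^ d : ℕ) : ℤ) := by push_cast; ring
            have h2 : lam p < d.factorial * M ^ d := by exact_mod_cast h1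
            omega
          · rw [Function.update_of_ne hne]
            exact hs'b p
        · intro p hp
          have hne : p ≠ p₀ := fun h => hp (h ▸ hp₀P)
          rw [Function.update_of_ne hne]
          exact hs'supp p (fun h => hp (Finset.erase_subset _ _ h))
        · have h1 : ∑ p ∈ P, lam p • p = lam p₀ • p₀ + ∑ p ∈ P.erase p₀, lam p • p :=
            (Finset.add_sum_erase P _ hp₀P).symm
          have h2 : ∑ p ∈ P, (Function.update s' p₀ (lam p₀)) p • p
              = lam p₀ • p₀ + ∑ p ∈ P.erase p₀, s' p • p := by
            rw [← Finset.add_sum_erase P _ hp₀P, Function.update_self]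
            congr 1
            apply Finset.sum_congr rfl
            intro p hp
            rw [Function.update_of_ne (Finset.mem_erase.mp hp).1]
          rw [h1, heq, h2, add_assoc]
      · push_neg at hAc
        have hge : ∀ p ∈ P, 0 < α p → α p ≤ (lam p : ℤ) := hAc
        set lam' : (Fin d → ℕ) → ℕ := fun p => ((lam p : ℤ) - α p).toNat with hlam'
        have hcast : ∀ p ∈ P, (lam' p : ℤ) = (lam p : ℤ) - α p := by
          intro p hp
          have h7 : (0 : ℤ) ≤ (lam p : ℤ) - α p := by
            rcases le_or_gt (α p) 0 with h | h
            · have : (0:ℤ) ≤ (lam p : ℤ) := Int.natCast_nonneg _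
              omega
            · have h6 := hge p hp h
              omega
          show ((((lam p : ℤ) - α p).toNat : ℕ) : ℤ) = (lam p : ℤ) - α p
          rw [Int.toNat_of_nonneg h7]
        have hsum : ∑ p ∈ P, lam' p • p = ∑ p ∈ P, lam p • p := by
          funext k
          rw [Finset.sum_apply, Finset.sum_apply]
          have hz : ((∑ p ∈ P, (lam' p • p) k : ℕ) : ℤ) = ((∑ p ∈ P, (lam p • p) k : ℕ) : ℤ) := by
            have e1 : ∑ p ∈ P, (lam' p : ℤ) * (p k : ℤ)
                = ∑ p ∈ P, ((lam p : ℤ) - α p) * (p k : ℤ) :=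
              Finset.sum_congr rfl (fun p hp => by rw [hcast p hp])
            have e2 : ∑ p ∈ P, ((lam p : ℤ) - α p) * (p k : ℤ)
                = ∑ p ∈ P, (lam p : ℤ) * (p k : ℤ) - ∑ p ∈ P, α p * (p k : ℤ) := by
              rw [← Finset.sum_sub_distrib]
              apply Finset.sum_congr rfl
              intro p _
              ring
            simp only [Pi.smul_apply, smul_eq_mul]
            push_cast
            rw [e1, e2, hαrel k, sub_zero]
          exact_mod_cast hz
        have hmeas2 : (∑ p ∈ P.filter (fun p => 0 < α p), lam' p)
            < (∑ p ∈ P.filter (fun p => 0 < α p), lam p) := by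
          apply Finset.sum_lt_sum_of_nonempty
          · exact ⟨q₁, Finset.mem_filter.mpr ⟨hq₁P, hq₁pos⟩⟩
          · intro p hp
            obtain ⟨hpP, hppos⟩ := Finset.mem_filter.mp hp
            have h1 := hge p hpP hppos
            have h2 := hcast p hpP
            omega
        obtain ⟨Q, s, mu, hh1, hh2, hh3, hh4, heq⟩ := ihN lam' (by omega)
        exact ⟨Q, s, mu, hh1, hh2, hh3, hh4, by rw [← hsum]; exact heq⟩

end SLC

namespace SLC

lemma IndepQ.card_le {d : ℕ} {Q : Finset (Fin d → ℕ)} (h : IndepQ Q) : Q.card ≤ d := by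
  have h2 := h.fintype_card_le_finrank
  rwa [Module.finrank_fintype_fun_eq_card, Fintype.card_fin, Fintype.card_coe] at h2

lemma card_le_pow {d M : ℕ} (P : Finset (Fin d → ℕ)) (hPM : ∀ p ∈ P, ∀ k, p k ≤ M) :
    P.card ≤ (M + 1) ^ d := by
  classical
  have h : P.card ≤ (Finset.univ : Finset (Fin d → Fin (M + 1))).card := by
    apply Finset.card_le_card_of_injOn (fun p k => (⟨min (p k) M, by omega⟩ : Fin (M + 1)))
      (fun p _ => Finset.mem_univ _)
    intro p hp q hq hpq
    funext k
    have h1 := hPM p hp k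
    have h2 := hPM q hq k
    have h3 : min (p k) M = min (q k) M := congrArg Fin.val (congrFun hpq k)
    omega
  calc P.card ≤ _ := h
    _ = (M + 1) ^ d := by simp [Finset.card_univ]

lemma arith (d M cc : ℕ) (hM : 1 ≤ M) (hd : 1 ≤ d) (hc : cc ≤ (M + 1) ^ d) :
    M + cc * (d.factorial * M ^ d * M) ≤ (2 * M + 1) ^ d * (M ^ (2 * d) * d ^ d) := by
  have h1 : d.factorial ≤ d ^ d := Nat.factorial_le_pow d
  have h2 : M ^ d * M ≤ M ^ (2 * d) := by
    rw [← pow_succ]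
    exact Nat.pow_le_pow_right hM (by omega)
  have h3 : cc * (d.factorial * M ^ d * M) ≤ (M + 1) ^ d * (d ^ d * M ^ (2 * d)) := by
    calc cc * (d.factorial * M ^ d * M) ≤ (M + 1) ^ d * (d.factorial * M ^ d * M) :=
          Nat.mul_le_mul_right _ hc
      _ = (M + 1) ^ d * (d.factorial * (M ^ d * M)) := by ring
      _ ≤ (M + 1) ^ d * (d ^ d * M ^ (2 * d)) :=
          Nat.mul_le_mul_left _ (Nat.mul_le_mul h1 h2)
  have h4 : M ≤ M ^ (2 * d) * d ^ d := by
    calc M = M ^ 1 * 1 := by ring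
      _ ≤ M ^ (2 * d) * d ^ d :=
          Nat.mul_le_mul (Nat.pow_le_pow_right hM (by omega)) (Nat.one_le_iff_ne_zero.mpr (by positivity))
  have h5 : (M + 1) ^ d + 1 ≤ (2 * M + 1) ^ d :=
    Nat.succ_le_of_lt (Nat.pow_lt_pow_left (by omega) (by omega))
  calc M + cc * (d.factorial * M ^ d * M)
      ≤ M ^ (2 * d) * d ^ d + (M + 1) ^ d * (d ^ d * M ^ (2 * d)) := Nat.add_le_add h4 h3
    _ = ((M + 1) ^ d + 1) * (M ^ (2 * d) * d ^ d) := by ring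
    _ ≤ (2 * M + 1) ^ d * (M ^ (2 * d) * d ^ d) := Nat.mul_le_mul_right _ h5

end SLC


namespace SLC

lemma self_mem {d : ℕ} (b : Fin d → ℕ) (Q : Finset (Fin d → ℕ)) : b ∈ linSet b Q :=
  ⟨fun _ => 0, by simp⟩

lemma linSet_mono {d : ℕ} {cc b : Fin d → ℕ} {PP Q : Finset (Fin d → ℕ)}
    (hb : b ∈ linSet cc PP) (hQ : Q ⊆ PP) : linSet b Q ⊆ linSet cc PP := by
  classical
  intro v hv
  obtain ⟨t, hbt⟩ := hb
  obtain ⟨lam, hvl⟩ := hv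
  refine ⟨fun p => t p + (if p ∈ Q then lam p else 0), ?_⟩
  have e1 : ∑ p ∈ PP, (t p + if p ∈ Q then lam p else 0) • p
      = ∑ p ∈ PP, (t p • p + (if p ∈ Q then lam p else 0) • p) := by
    apply Finset.sum_congr rfl
    intro p _
    rw [add_smul]
  have e2 : ∑ p ∈ PP, (if p ∈ Q then lam p else 0) • p = ∑ p ∈ Q, lam p • p := by
    rw [← Finset.sum_subset hQ (f := fun p => (if p ∈ Q then lam p else 0) • p)
        (fun x _ hnx => by simp [hnx])]
    apply Finset.sum_congr rfl
    intro p hp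
    rw [if_pos hp]
  rw [hvl, hbt, e1, Finset.sum_add_distrib, e2, add_assoc]

lemma erase_zero_sum {d : ℕ} (Q : Finset (Fin d → ℕ)) (lam : (Fin d → ℕ) → ℕ) :
    ∑ p ∈ Q, lam p • p = ∑ p ∈ Q.erase 0, lam p • p := by
  classical
  by_cases h : (0 : Fin d → ℕ) ∈ Q
  · rw [← Finset.add_sum_erase Q _ h, smul_zero, zero_add]
  · rw [Finset.erase_eq_of_notMem h]

end SLC



open SLC

/-- Carathéodory-style reduction of semilinear representations: if
S = ⋃ᵢ L(cᵢ; Pᵢ) with all base and period entries ≤ M, then S = ⋃ⱼ L(bⱼ; Qⱼ)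
where each L(bⱼ; Qⱼ) is contained in some L(cᵢ; Pᵢ), Qⱼ is a linearly
independent (over ℚ) subset of Pᵢ (hence of cardinality ≤ d), and the entries
of bⱼ are at most (2M+1)^d · (M^d · d^{d/2})² = (2M+1)^d · M^{2d} · d^d. -/
theorem semilinear_caratheodory {d : ℕ} {ι : Type*} [Fintype ι] (M : ℕ)
    (c : ι → Fin d → ℕ) (P : ι → Finset (Fin d → ℕ))
    (hc : ∀ i k, c i k ≤ M) (hP : ∀ i, ∀ p ∈ P i, ∀ k, p k ≤ M) :
    ∃ (m : ℕ) (b : Fin m → Fin d → ℕ) (Qs : Fin m → Finset (Fin d → ℕ)),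
      (⋃ i, linSet (c i) (P i)) = (⋃ j, linSet (b j) (Qs j)) ∧
      ∀ j, ∃ i, linSet (b j) (Qs j) ⊆ linSet (c i) (P i) ∧
        Qs j ⊆ P i ∧
        LinearIndependent ℚ
          (fun p : (Qs j : Finset (Fin d → ℕ)) => (fun k => ((p : Fin d → ℕ) k : ℚ))) ∧
        (Qs j).card ≤ d ∧
        ∀ k, b j k ≤ (2 * M + 1) ^ d * (M ^ (2 * d) * d ^ d) := by
  classical
  set N : ℕ := (2 * M + 1) ^ d * (M ^ (2 * d) * d ^ d) with hN
  have hcN : ∀ (x : Fin d → ℕ), (∀ k, x k ≤ M) → ∀ k, x k ≤ N := by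
    intro x hx k
    have hd : 1 ≤ d := k.pos
    rcases Nat.eq_zero_or_pos M with hM0 | hM1
    · have := hx k
      omega
    · have hdd : 0 < d ^ d := Nat.pow_pos hd  -- may need rename
      have h2M : 0 < (2 * M + 1) ^ d := Nat.pow_pos (by omega)
      calc x k ≤ M := hx k
        _ = M ^ 1 := (pow_one M).symm
        _ ≤ M ^ (2 * d) := Nat.pow_le_pow_right hM1 (by omega)
        _ ≤ M ^ (2 * d) * d ^ d := Nat.le_mul_of_pos_right _ hdd
        _ ≤ (2 * M + 1) ^ d * (M ^ (2 * d) * d ^ d) := Nat.le_mul_of_pos_left _ h2M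
  let J := Σ i : ι, (↥(P i).powerset × (Fin d → Fin (N + 1)))
  let bval : J → (Fin d → ℕ) := fun j => fun k => ((j.2.2 k : ℕ))
  let good : J → Prop := fun j =>
    IndepQ (j.2.1 : Finset (Fin d → ℕ)) ∧ bval j ∈ linSet (c j.1) (P j.1)
  let Qf : J → Finset (Fin d → ℕ) := fun j => if good j then (j.2.1 : Finset (Fin d → ℕ)) else ∅
  let bf : J → (Fin d → ℕ) := fun j => if good j then bval j else c j.1
  have hj : ∀ j : J, Qf j ⊆ P j.1 ∧ bf j ∈ linSet (c j.1) (P j.1) ∧ IndepQ (Qf j)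
      ∧ (∀ k, bf j k ≤ N) := by
    intro j
    by_cases hg : good j
    · refine ⟨?_, ?_, ?_, ?_⟩
      · show (if good j then (j.2.1 : Finset (Fin d → ℕ)) else ∅) ⊆ P j.1
        rw [if_pos hg]
        exact Finset.mem_powerset.mp j.2.1.2
      · show (if good j then bval j else c j.1) ∈ linSet (c j.1) (P j.1)
        rw [if_pos hg]
        exact hg.2
      · show IndepQ (if good j then (j.2.1 : Finset (Fin d → ℕ)) else ∅)
        rw [if_pos hg]
        exact hg.1
      · intro k
        show (if good j then bval j else c j.1) k ≤ N
        rw [if_pos hg]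
        exact Nat.lt_succ_iff.mp (j.2.2 k).2
    · refine ⟨?_, ?_, ?_, ?_⟩
      · show (if good j then (j.2.1 : Finset (Fin d → ℕ)) else ∅) ⊆ P j.1
        rw [if_neg hg]
        exact Finset.empty_subset _
      · show (if good j then bval j else c j.1) ∈ linSet (c j.1) (P j.1)
        rw [if_neg hg]
        exact self_mem _ _
      · show IndepQ (if good j then (j.2.1 : Finset (Fin d → ℕ)) else ∅)
        rw [if_neg hg]
        exact indepQ_empty
      · intro k
        show (if good j then bval j else c j.1) k ≤ N
        rw [if_neg hg]
        exact hcN (c j.1) (hc j.1) k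
  have hcover : (⋃ i, linSet (c i) (P i)) = ⋃ j : J, linSet (bf j) (Qf j) := by
    apply Set.Subset.antisymm
    · intro v hv
      rw [Set.mem_iUnion] at hv
      obtain ⟨i, lam, hvl⟩ := hv
      set P' := (P i).erase 0 with hP'
      have hP'M : ∀ p ∈ P', ∀ k, p k ≤ M :=
        fun p hp k => hP i p (Finset.erase_subset _ _ hp) k
      obtain ⟨Q, s, mu, hQsub, hQind, hsb, hssupp, heq⟩ :=
        decomp M P'.card P' le_rfl hP'M (Finset.notMem_erase _ _) lam
      set b₀ : Fin d → ℕ := c i + ∑ p ∈ P', s p • p with hb₀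
      have hb₀mem : b₀ ∈ linSet (c i) (P i) := ⟨s, by rw [erase_zero_sum (P i) s]⟩
      have hb₀N : ∀ k, b₀ k ≤ N := by
        intro k
        have hd : 1 ≤ d := k.pos
        have hb₀k : b₀ k = c i k + ∑ p ∈ P', (s p • p) k := by
          rw [hb₀, Pi.add_apply, Finset.sum_apply]
        rcases Nat.eq_zero_or_pos M with hM0 | hM1
        · have hP'e : P' = ∅ := by
            apply Finset.eq_empty_iff_forall_notMem.mpr
            intro p hp
            have hp0 : p = 0 := by
              funext k'
              have := hP'M p hp k'
              show p k' = 0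
              omega
            rw [hP'] at hp
            exact Finset.notMem_erase _ _ (hp0 ▸ hp)
          have hck : c i k = 0 := by
            have := hc i k
            omega
          rw [hb₀k, hP'e, hck]
          simp
        · have hsum : ∑ p ∈ P', (s p • p) k ≤ P'.card * (d.factorial * M ^ d * M) := by
            have h := Finset.sum_le_card_nsmul P' (fun p => (s p • p) k)
              (d.factorial * M ^ d * M) ?_
            · simpa [smul_eq_mul] using h
            · intro p hp
              show s p * p k ≤ d.factorial * M ^ d * M
              exact Nat.mul_le_mul (hsb p) (hP'M p hp k)
          have hcard : P'.card ≤ (M + 1) ^ d := card_le_pow P' hP'M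
          calc b₀ k ≤ M + P'.card * (d.factorial * M ^ d * M) := by
                rw [hb₀k]
                exact Nat.add_le_add (hc i k) hsum
            _ ≤ N := arith d M P'.card hM1 hd hcard
      set j : J := ⟨i, ⟨⟨Q, Finset.mem_powerset.mpr (hQsub.trans (Finset.erase_subset _ _))⟩,
        fun k => ⟨b₀ k, Nat.lt_succ_of_le (hb₀N k)⟩⟩⟩ with hjdef
      have hbval : bval j = b₀ := rfl
      have hgood : good j := by
        constructor
        · exact hQind
        · rw [hbval]
          exact hb₀mem
      have hvb : v = b₀ + ∑ q ∈ Q, mu q • q := by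
        rw [hvl, erase_zero_sum (P i) lam, ← hP', heq, hb₀, add_assoc]
      rw [Set.mem_iUnion]
      refine ⟨j, ?_⟩
      have hbfj : bf j = b₀ := by
        show (if good j then bval j else c j.1) = b₀
        rw [if_pos hgood, hbval]
      have hQfj : Qf j = Q := by
        show (if good j then (j.2.1 : Finset (Fin d → ℕ)) else ∅) = Q
        rw [if_pos hgood]
      rw [hbfj, hQfj]
      exact ⟨mu, hvb⟩
    · apply Set.iUnion_subset
      intro j
      exact (linSet_mono (hj j).2.1 (hj j).1).trans (Set.subset_iUnion (fun i => linSet (c i) (P i)) j.1)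
  let e : Fin (Fintype.card J) ≃ J := (Fintype.equivFin J).symm
  refine ⟨Fintype.card J, fun j' => bf (e j'), fun j' => Qf (e j'), ?_, ?_⟩
  · rw [hcover, ← (e.surjective.iUnion_comp (fun j => linSet (bf j) (Qf j)))]
  · intro j'
    exact ⟨(e j').1, linSet_mono (hj (e j')).2.1 (hj (e j')).1, (hj (e j')).1,
      (hj (e j')).2.2.1, ((hj (e j')).2.2.1).card_le, fun k => (hj (e j')).2.2.2 k⟩
end

section
/- Let π be an accepting run of a one-counter automaton A and let d be a direction available at π. Then every direction available at π is also available at the run π + d obtained by inserting d into π. That is, avail(π) ⊆ avail(π + d). -/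
/-- A transition of a one-counter automaton without zero tests:
(source state, optional letter read, counter change, target state). -/
abbrev Tr (Q A : Type) : Type := Q × Option A × ℤ × Q

/-- Source state of a transition. -/
def Tr.src {Q A : Type} (t : Tr Q A) : Q := t.1
/-- Target state of a transition. -/
def Tr.tgt {Q A : Type} (t : Tr Q A) : Q := t.2.2.2
/-- Counter change of a transition. -/
def Tr.wt {Q A : Type} (t : Tr Q A) : ℤ := t.2.2.1
/-- Letter (or ε) read by a transition. -/
def Tr.lab {Q A : Type} (t : Tr Q A) : Option A := t.2.1

/-- The effect of a walk on the counter: total counter change. -/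
def effect {Q A : Type} (l : List (Tr Q A)) : ℤ := (l.map Tr.wt).sum

/-- The word read along a walk. -/
def word {Q A : Type} (l : List (Tr Q A)) : List A := l.filterMap Tr.lab

/-- A walk of the automaton M: a sequence of transitions of M with matching
intermediate states. -/
def IsWalk {Q A : Type} (M : Set (Tr Q A)) (l : List (Tr Q A)) : Prop :=
  (∀ t ∈ l, t ∈ M) ∧ l.Chain' (fun t t' => t.tgt = t'.src)

/-- The state visited at position i (0 ≤ i ≤ length) of a walk starting at p. -/
def stateAt {Q A : Type} (p : Q) (l : List (Tr Q A)) (i : ℕ) : Q :=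
  match (l.drop i).head? with
  | some t => t.src
  | none => (l.getLast?.map Tr.tgt).getD p

/-- The counter value at position i of a walk starting at counter value c. -/
def counterAt {Q A : Type} (c : ℤ) (l : List (Tr Q A)) (i : ℕ) : ℤ :=
  c + effect (l.take i)

/-- drop of a walk: the minimal counter value needed at its start so that the
counter stays nonnegative throughout (maximum over prefixes of minus the
prefix effect). -/
def dropVal {Q A : Type} (l : List (Tr Q A)) : ℤ :=
  (l.inits.map fun pfx => -effect pfx).foldr max 0

/-- A valid run of M starting in configuration (p, c): a walk starting in
state p whose counter values all stay nonnegative. -/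
def ValidFrom {Q A : Type} (M : Set (Tr Q A)) (p : Q) (c : ℤ) (l : List (Tr Q A)) : Prop :=
  IsWalk M l ∧ (∀ t ∈ l.head?, t.src = p) ∧ 0 ≤ c ∧
    ∀ i ≤ l.length, 0 ≤ counterAt c l i

/-- A walk of M from state p to state q. -/
def WalkFromTo {Q A : Type} (M : Set (Tr Q A)) (p : Q) (l : List (Tr Q A)) (q : Q) : Prop :=
  IsWalk M l ∧ (∀ t ∈ l.head?, t.src = p) ∧ (∀ t ∈ l.getLast?, t.tgt = q) ∧
    (l = [] → p = q)

/-- A direction: a pair of anchored cycles (α at state p, β at state q). -/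
structure Dir (Q A : Type) where
  p : Q
  al : List (Tr Q A)
  q : Q
  bl : List (Tr Q A)

/-- Insertion of a direction d into a run (given by its walk l starting at
state q0): there is a factorization l = l₁·l₂·l₃ such that the result is
l₁·α·l₂·β·l₃, with α inserted at an occurrence of state p and β at a later
occurrence of state q. -/
def Inserted {Q A : Type} (q0 : Q) (d : Dir Q A) (l l' : List (Tr Q A)) : Prop :=
  ∃ l₁ l₂ l₃ : List (Tr Q A), l = l₁ ++ l₂ ++ l₃ ∧
    l' = l₁ ++ d.al ++ l₂ ++ d.bl ++ l₃ ∧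
    stateAt q0 l l₁.length = d.p ∧
    stateAt q0 l (l₁.length + l₂.length) = d.q

/-- A direction of the simple OCA M: α is a cycle on p, β is a cycle on q,
0 < |α| + |β|, 0 ≤ effect(α), effect(α) + effect(β) = 0, and if
effect(α) = 0 then α or β is empty. -/
def IsDir {Q A : Type} (M : Set (Tr Q A)) (d : Dir Q A) : Prop :=
  WalkFromTo M d.p d.al d.p ∧ WalkFromTo M d.q d.bl d.q ∧
  0 < d.al.length + d.bl.length ∧ 0 ≤ effect d.al ∧
  effect d.al + effect d.bl = 0 ∧
  (effect d.al = 0 → d.al = [] ∨ d.bl = [])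

/-- An accepting run of the simple OCA M: from (q0, 0) to (qf, 0). -/
def AccRun {Q A : Type} (M : Set (Tr Q A)) (q0 qf : Q) (l : List (Tr Q A)) : Prop :=
  ValidFrom M q0 0 l ∧ stateAt q0 l l.length = qf ∧ counterAt 0 l l.length = 0

/-- The set of directions available at an accepting run. -/
def Avail {Q A : Type} (M : Set (Tr Q A)) (q0 qf : Q) (l : List (Tr Q A)) :
    Set (Dir Q A) :=
  {d | IsDir M d ∧ ∃ l', Inserted q0 d l l' ∧ AccRun M q0 qf l'}

section AvailHelpers

variable {Q A : Type}

@[simp] lemma effect_nil : effect ([] : List (Tr Q A)) = 0 := rfl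

@[simp] lemma effect_append (u v : List (Tr Q A)) : effect (u ++ v) = effect u + effect v := by
  simp [effect]

/-- The end state of a walk starting at `q0`. -/
def endState (q0 : Q) (l : List (Tr Q A)) : Q := (l.getLast?.map Tr.tgt).getD q0

@[simp] lemma endState_nil (q0 : Q) : endState q0 ([] : List (Tr Q A)) = q0 := rfl

lemma endState_append (q0 : Q) (u v : List (Tr Q A)) :
    endState q0 (u ++ v) = endState (endState q0 u) v := by
  cases hv : v.getLast? with
  | none =>
      have : v = [] := by simpa using hv
      subst this
      simp [endState]
  | some x =>
      simp [endState, List.getLast?_append, hv]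

/-- Chain-consistency together with the start-state condition. -/
def Good (q0 : Q) (l : List (Tr Q A)) : Prop :=
  (∀ t ∈ l.head?, t.src = q0) ∧ l.Chain' (fun t t' => t.tgt = t'.src)

lemma good_append (q0 : Q) (u v : List (Tr Q A)) :
    Good q0 (u ++ v) ↔ Good q0 u ∧ Good (endState q0 u) v := by
  rcases u with - | ⟨a, u'⟩
  · simp [Good, endState, List.Chain']
  · have hlast : (a :: u').getLast? = some ((a :: u').getLast (by simp)) :=
      List.getLast?_eq_getLast _
    have hes : endState q0 (a :: u') = ((a :: u').getLast (by simp)).tgt := by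
      simp [endState, hlast]
    constructor
    · rintro ⟨hh, hc⟩
      unfold List.Chain' at hc
      rw [List.isChain_append] at hc
      refine ⟨⟨?_, hc.1⟩, ?_, hc.2.1⟩
      · intro t ht
        apply hh
        simpa using ht
      · intro t ht
        rw [hes]
        exact (hc.2.2 _ (by rw [hlast]; rfl) t ht).symm
    · rintro ⟨⟨hh, hcu⟩, hh2, hcv⟩
      refine ⟨?_, ?_⟩
      · intro t ht
        apply hh
        simpa using ht
      · unfold List.Chain'
        rw [List.isChain_append]
        refine ⟨hcu, hcv, ?_⟩
        intro x hx t ht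
        rw [hlast] at hx
        simp only [Option.mem_def, Option.some.injEq] at hx
        rw [hx] at hes
        rw [← hes]
        exact (hh2 t ht).symm

lemma endState_cycle {p : Q} {c : List (Tr Q A)} (h : ∀ t ∈ c.getLast?, t.tgt = p) :
    endState p c = p := by
  cases hc : c.getLast? with
  | none => simp [endState, hc]
  | some x => simp [endState, hc, h x (by rw [hc]; rfl)]

lemma stateAt_split (q0 : Q) (u v : List (Tr Q A)) (h : Good q0 (u ++ v)) :
    stateAt q0 (u ++ v) u.length = endState q0 u := by
  have hd : (u ++ v).drop u.length = v := by
    simp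
  rcases v with - | ⟨t, v'⟩
  · rw [List.append_nil]
    simp [stateAt, List.drop_length, endState]
  · simp only [stateAt, hd, List.head?_cons]
    exact ((good_append q0 u (t :: v')).mp h).2.1 t rfl

/-- All counter values along `l`, started at `c`, are nonnegative. -/
def Nonneg (c : ℤ) (l : List (Tr Q A)) : Prop := ∀ n : ℕ, 0 ≤ c + effect (l.take n)

lemma nonneg_mono {c c' : ℤ} (h : c ≤ c') {l : List (Tr Q A)} (hn : Nonneg c l) :
    Nonneg c' l := fun n => le_trans (hn n) (by linarith)

lemma nonneg_append {c : ℤ} {u v : List (Tr Q A)} :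
    Nonneg c (u ++ v) ↔ Nonneg c u ∧ Nonneg (c + effect u) v := by
  constructor
  · intro h
    refine ⟨fun n => ?_, fun n => ?_⟩
    · rcases le_or_gt n u.length with hn | hn
      · have := h n
        rwa [List.take_append_of_le_length hn] at this
      · have := h u.length
        rw [List.take_append_of_le_length le_rfl, List.take_length] at this
        rwa [List.take_of_length_le (le_of_lt hn)]
    · have := h (u.length + n)
      rw [List.take_length_add_append, effect_append] at this
      linarith
  · rintro ⟨h1, h2⟩ n
    rcases le_or_gt n u.length with hn | hn
    · rw [List.take_append_of_le_length hn]
      exact h1 n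
    · have hn' : n = u.length + (n - u.length) := by omega
      rw [hn', List.take_length_add_append, effect_append, ← add_assoc]
      exact h2 _

lemma accRun_iff {M : Set (Tr Q A)} {q0 qf : Q} {l : List (Tr Q A)} :
    AccRun M q0 qf l ↔
      (∀ t ∈ l, t ∈ M) ∧ Good q0 l ∧ Nonneg 0 l ∧ endState q0 l = qf ∧ effect l = 0 := by
  have hst : stateAt q0 l l.length = endState q0 l := by
    simp [stateAt, List.drop_length, endState]
  have hct : counterAt (0 : ℤ) l l.length = effect l := by
    simp [counterAt, List.take_length]
  constructor
  · rintro ⟨⟨⟨hm, hc⟩, hh, -, hnn⟩, he1, he2⟩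
    refine ⟨hm, ⟨hh, hc⟩, fun n => ?_, by rwa [hst] at he1, by rwa [hct] at he2⟩
    rcases le_or_gt n l.length with hn | hn
    · have := hnn n hn
      simpa [counterAt] using this
    · have := hnn l.length le_rfl
      rw [List.take_of_length_le (le_of_lt hn)]
      simpa [counterAt, List.take_length] using this
  · rintro ⟨hm, ⟨hh, hc⟩, hnn, he1, he2⟩
    refine ⟨⟨⟨hm, hc⟩, hh, le_refl 0, fun i _ => ?_⟩, by rwa [hst], by rwa [hct]⟩
    simpa [counterAt] using hnn i

/-- Master lemma: inserting a "direction"-like pair of cycles into an accepting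
run at state-compatible positions, with the two counter conditions, yields an
accepting run. -/
lemma insert_acc {M : Set (Tr Q A)} {q0 qf p q : Q} {al bl u v w : List (Tr Q A)}
    (hm : AccRun M q0 qf (u ++ v ++ w))
    (hal : WalkFromTo M p al p) (hbl : WalkFromTo M q bl q)
    (hea : 0 ≤ effect al) (heff : effect al + effect bl = 0)
    (hu : endState q0 u = p) (huv : endState q0 (u ++ v) = q)
    (hc1 : Nonneg (effect u) al)
    (hc2 : Nonneg (effect u + effect al + effect v) bl) :
    AccRun M q0 qf (u ++ al ++ v ++ bl ++ w) ∧
      stateAt q0 (u ++ v ++ w) u.length = p ∧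
      stateAt q0 (u ++ v ++ w) (u.length + v.length) = q := by
  rw [accRun_iff] at hm
  obtain ⟨hmem, hgood, hnn, hend, heffm⟩ := hm
  obtain ⟨⟨halm, halc⟩, halh, hall, -⟩ := hal
  obtain ⟨⟨hblm, hblc⟩, hblh, hbll, -⟩ := hbl
  have hce_al : endState p al = p := endState_cycle hall
  have hce_bl : endState q bl = q := endState_cycle hbll
  have e2 : endState p v = q := by
    rw [← huv, endState_append, hu]
  have hGu : (Good q0 u ∧ Good p v) ∧ Good q w := by
    have h := hgood
    simp only [good_append, endState_append] at h
    rw [hu, e2] at h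
    exact h
  have hNu : (Nonneg 0 u ∧ Nonneg (0 + effect u) v) ∧ Nonneg (0 + (effect u + effect v)) w := by
    have h := hnn
    simp only [nonneg_append, effect_append] at h
    exact h
  refine ⟨accRun_iff.mpr ⟨?_, ?_, ?_, ?_, ?_⟩, ?_, ?_⟩
  · intro t ht
    simp only [List.mem_append] at ht
    rcases ht with (((ht | ht) | ht) | ht) | ht
    · exact hmem t (by simp [ht])
    · exact halm t ht
    · exact hmem t (by simp [ht])
    · exact hblm t ht
    · exact hmem t (by simp [ht])
  · simp only [good_append, endState_append]
    rw [hu, hce_al, e2, hce_bl]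
    exact ⟨⟨⟨⟨hGu.1.1, halh, halc⟩, hGu.1.2⟩, hblh, hblc⟩, hGu.2⟩
  · simp only [nonneg_append, effect_append]
    refine ⟨⟨⟨⟨hNu.1.1, ?_⟩, ?_⟩, ?_⟩, ?_⟩
    · exact nonneg_mono (by linarith) hc1
    · exact nonneg_mono (by linarith) hNu.1.2
    · exact nonneg_mono (by linarith) hc2
    · exact nonneg_mono (by linarith) hNu.2
  · simp only [endState_append]
    rw [hu, hce_al, e2, hce_bl]
    simp only [endState_append] at hend
    rw [hu, e2] at hend
    exact hend
  · simp only [effect_append] at heffm ⊢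
    linarith
  · have hgood' : Good q0 (u ++ (v ++ w)) := by rwa [← List.append_assoc]
    have := stateAt_split q0 u (v ++ w) hgood'
    rw [← List.append_assoc] at this
    rw [this, hu]
  · have := stateAt_split q0 (u ++ v) w hgood
    rw [List.length_append] at this
    rw [this, huv]

/-- A sufficient condition for a direction to be available at an accepting run. -/
lemma avail_step {M : Set (Tr Q A)} {q0 qf : Q} {π' : List (Tr Q A)} {e : Dir Q A}
    (heDir : IsDir M e) (u v w : List (Tr Q A))
    (hsplit : π' = u ++ v ++ w)
    (hacc' : AccRun M q0 qf π')
    (ha : endState q0 u = e.p) (hb : endState q0 (u ++ v) = e.q)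
    (hc1 : Nonneg (effect u) e.al)
    (hc2 : Nonneg (effect u + effect e.al + effect v) e.bl) :
    e ∈ Avail M q0 qf π' := by
  have h := heDir
  obtain ⟨hal, hbl, -, hea, heff, -⟩ := h
  rw [hsplit] at hacc'
  obtain ⟨hA, hS1, hS2⟩ := insert_acc hacc' hal hbl hea heff ha hb hc1 hc2
  exact ⟨heDir, u ++ e.al ++ v ++ e.bl ++ w,
    ⟨u, v, w, hsplit, rfl, by rw [hsplit]; exact hS1, by rw [hsplit]; exact hS2⟩, hA⟩

end AvailHelpers

/-- Monotonicity of availability: if π is an accepting run and d is a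
direction available at π, then every direction available at π is also
available at π + d (any accepting run obtained by inserting d into π). -/
theorem avail_monotone {Q A : Type} (M : Set (Tr Q A)) (q0 qf : Q)
    (π π' : List (Tr Q A)) (d : Dir Q A)
    (hacc : AccRun M q0 qf π)
    (hdav : d ∈ Avail M q0 qf π)
    (hins : Inserted q0 d π π')
    (hacc' : AccRun M q0 qf π') :
    Avail M q0 qf π ⊆ Avail M q0 qf π' := by
  rintro e ⟨heDir, m', ⟨k₁, k₂, k₃, hπk, hm'def, hsk1, hsk2⟩, haccm'⟩
  obtain ⟨hdDir, -⟩ := hdav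
  obtain ⟨l₁, l₂, l₃, hπl, hπ'def, hsl1, hsl2⟩ := hins
  obtain ⟨hdal, hdbl, -, hda, hdeff, -⟩ := hdDir
  have heDir' := heDir
  obtain ⟨heal, hebl, -, hea, heeff, -⟩ := heDir'
  have hπgood : Good q0 π := (accRun_iff.mp hacc).2.1
  have hπk' : π = k₁ ++ (k₂ ++ k₃) := by rw [hπk, List.append_assoc]
  have hπl' : π = l₁ ++ (l₂ ++ l₃) := by rw [hπl, List.append_assoc]
  -- endState versions of the four stateAt hypotheses
  have hek1 : endState q0 k₁ = e.p := by
    rw [hπk'] at hsk1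
    rw [← hsk1]
    exact (stateAt_split q0 k₁ (k₂ ++ k₃) (by rw [← hπk']; exact hπgood)).symm
  have hek2 : endState q0 (k₁ ++ k₂) = e.q := by
    rw [hπk] at hsk2
    rw [← List.length_append] at hsk2
    rw [← hsk2]
    exact (stateAt_split q0 (k₁ ++ k₂) k₃ (by rw [List.append_assoc, ← hπk']; exact hπgood)).symm
  have hel1 : endState q0 l₁ = d.p := by
    rw [hπl'] at hsl1
    rw [← hsl1]
    exact (stateAt_split q0 l₁ (l₂ ++ l₃) (by rw [← hπl']; exact hπgood)).symm
  have hel2 : endState q0 (l₁ ++ l₂) = d.q := by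
    rw [hπl] at hsl2
    rw [← List.length_append] at hsl2
    rw [← hsl2]
    exact (stateAt_split q0 (l₁ ++ l₂) l₃ (by rw [List.append_assoc, ← hπl']; exact hπgood)).symm
  -- cycle endState facts for d
  have hcd : endState d.p d.al = d.p := endState_cycle hdal.2.2.1
  have hcdb : endState d.q d.bl = d.q := endState_cycle hdbl.2.2.1
  have hdpl : endState d.p l₂ = d.q := by
    have h := hel2
    simp only [endState_append] at h
    rw [hel1] at h
    exact h
  -- Nonneg facts extracted from the accepting run π + e
  have hm'nn : Nonneg 0 (k₁ ++ e.al ++ k₂ ++ e.bl ++ k₃) := by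
    have h := (accRun_iff.mp haccm').2.2.1
    rwa [hm'def] at h
  have h1 := (nonneg_append.mp hm'nn).1
  have hnbl := (nonneg_append.mp h1).2
  have hnal := (nonneg_append.mp (nonneg_append.mp (nonneg_append.mp h1).1).1).2
  -- six-way case analysis on the relative position of the two insertions
  have hkl : k₁ ++ (k₂ ++ k₃) = l₁ ++ (l₂ ++ l₃) := by rw [← hπk', ← hπl']
  rcases List.append_eq_append_iff.mp hkl with ⟨x, hx, hx2⟩ | ⟨x, hx, hx2⟩
  · -- l₁ = k₁ ++ x
    rcases List.append_eq_append_iff.mp hx2 with ⟨y, hy, hy2⟩ | ⟨y, hy, hy2⟩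
    · -- x = k₂ ++ y : whole direction e is inserted before d.al
      refine avail_step heDir k₁ k₂ (y ++ d.al ++ l₂ ++ d.bl ++ l₃) ?_ hacc' hek1 hek2 ?_ ?_
      · rw [hπ'def, hx, hy]
        simp [List.append_assoc]
      · exact nonneg_mono (by linarith) hnal
      · exact nonneg_mono (by simp only [effect_append]; linarith) hnbl
    · -- k₂ = x ++ y
      have hepx : endState (endState q0 k₁) x = d.p := by
        have h := hel1
        rw [hx] at h
        simp only [endState_append] at h
        exact h
      rcases List.append_eq_append_iff.mp hy2 with ⟨z, hz, hz2⟩ | ⟨z, hz, hz2⟩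
      · -- y = l₂ ++ z : eal before dal, ebl after dbl
        refine avail_step heDir k₁ (x ++ d.al ++ l₂ ++ d.bl ++ z) k₃ ?_ hacc' hek1 ?_ ?_ ?_
        · rw [hπ'def, hx, hz2]
          simp [List.append_assoc]
        · simp only [endState_append]
          rw [hepx, hcd, hdpl, hcdb]
          rw [hy, hz] at hek2
          simp only [endState_append] at hek2
          rw [hepx, hdpl] at hek2
          exact hek2
        · exact nonneg_mono (by linarith) hnal
        · refine nonneg_mono ?_ hnbl
          simp only [hy, hz, effect_append]
          linarith
      · -- l₂ = y ++ z : eal before dal, ebl before dbl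
        refine avail_step heDir k₁ (x ++ d.al ++ y) (z ++ d.bl ++ l₃) ?_ hacc' hek1 ?_ ?_ ?_
        · rw [hπ'def, hx, hz]
          simp [List.append_assoc]
        · simp only [endState_append]
          rw [hepx, hcd]
          rw [hy] at hek2
          simp only [endState_append] at hek2
          rw [hepx] at hek2
          exact hek2
        · exact nonneg_mono (by linarith) hnal
        · refine nonneg_mono ?_ hnbl
          simp only [hy, effect_append]
          linarith
  · -- k₁ = l₁ ++ x
    rcases List.append_eq_append_iff.mp hx2 with ⟨y, hy, hy2⟩ | ⟨y, hy, hy2⟩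
    · -- x = l₂ ++ y : whole direction e is inserted after d.bl
      have hstep : endState d.q y = e.p := by
        have h := hek1
        rw [hx, hy] at h
        simp only [endState_append] at h
        rw [hel1, hdpl] at h
        exact h
      refine avail_step heDir (l₁ ++ d.al ++ l₂ ++ d.bl ++ y) k₂ k₃ ?_ hacc' ?_ ?_ ?_ ?_
      · rw [hπ'def, hy2]
        simp [List.append_assoc]
      · simp only [endState_append]
        rw [hel1, hcd, hdpl, hcdb]
        exact hstep
      · simp only [endState_append]
        rw [hel1, hcd, hdpl, hcdb, hstep]
        simp only [endState_append] at hek2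
        rw [hek1] at hek2
        exact hek2
      · refine nonneg_mono ?_ hnal
        simp only [hx, hy, effect_append]
        linarith
      · refine nonneg_mono ?_ hnbl
        simp only [hx, hy, effect_append]
        linarith
    · -- l₂ = x ++ y
      have hdpx : endState d.p x = e.p := by
        have h := hek1
        rw [hx] at h
        simp only [endState_append] at h
        rw [hel1] at h
        exact h
      rcases List.append_eq_append_iff.mp hy2 with ⟨z, hz, hz2⟩ | ⟨z, hz, hz2⟩
      · -- y = k₂ ++ z : dal before eal, dbl after ebl
        refine avail_step heDir (l₁ ++ d.al ++ x) k₂ (z ++ d.bl ++ l₃) ?_ hacc' ?_ ?_ ?_ ?_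
        · rw [hπ'def, hy, hz]
          simp [List.append_assoc]
        · simp only [endState_append]
          rw [hel1, hcd]
          exact hdpx
        · simp only [endState_append]
          rw [hel1, hcd, hdpx]
          simp only [endState_append] at hek2
          rw [hek1] at hek2
          exact hek2
        · refine nonneg_mono ?_ hnal
          simp only [hx, effect_append]
          linarith
        · refine nonneg_mono ?_ hnbl
          simp only [hx, effect_append]
          linarith
      · -- k₂ = y ++ z : dal before eal, dbl before ebl
        have hdpxy : endState (endState d.p x) y = d.q := by
          have h := hel2
          rw [hy] at h
          simp only [endState_append] at h
          rw [hel1] at h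
          exact h
        refine avail_step heDir (l₁ ++ d.al ++ x) (y ++ d.bl ++ z) k₃ ?_ hacc' ?_ ?_ ?_ ?_
        · rw [hπ'def, hy, hz2]
          simp [List.append_assoc]
        · simp only [endState_append]
          rw [hel1, hcd]
          exact hdpx
        · simp only [endState_append]
          rw [hel1, hcd, hdpxy, hcdb]
          rw [hx, hz] at hek2
          simp only [endState_append] at hek2
          rw [hel1, hdpxy] at hek2
          exact hek2
        · refine nonneg_mono ?_ hnal
          simp only [hx, effect_append]
          linarith
        · refine nonneg_mono ?_ hnbl
          simp only [hx, hz, effect_append]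
          linarith
end
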